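/- For all n ≥ 0, the integral over [-1,1] of (1+t)·(P_n^{(0,2)}(t))^2 dt equals 2. -/

import Mathlib

/-!
Put `u = (t + 1) / 2`, so that `1 + t = 2u` and `P = P_n^{(0,b+1)}` is a polynomial of degree `n`
in `u` with constant term `P(-1) = (-1)^n C(n+b+1, n)`. Expanding `P` and using the beta integrals
`∫ ((t-1)/2)^a ((t+1)/2)^c dt = 2 (-1)^a a! c! / (a+c+1)!`, the moment `∫ u^k P dt` becomes an
alternating binomial sum `∑ (-1)^s C(n+b+1, s) (n-s+1)(n-s+2)⋯(n-s+k)` whose summand is a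
polynomial of degree `k` in `s`. An `(n+b+1)`-st finite difference kills it, so the moments vanish
for `b < k ≤ n + b` and the `k = b` moment is `(-1)^n 2 n! b! / (n+b+1)!`. Hence
`∫ (1+t)^b P^2 dt = 2^b P(-1) ∫ u^b P dt = 2^(b+1) / (b+1)`, and the theorem is the case `b = 1`.
-/

open MeasureTheory intervalIntegral Finset

/-- The Jacobi polynomial `P_n^{(a,b)}` with nonnegative integer parameters,
given by the standard finite-sum formula, normalized by
`P_n^{(a,b)}(1) = (a+1)_n / n!`. -/
noncomputable def jacobiP (a b n : ℕ) (x : ℝ) : ℝ :=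
  ∑ s ∈ Finset.range (n + 1),
    (Nat.choose (n + a) (n - s) : ℝ) * (Nat.choose (n + b) s : ℝ) *
      ((x - 1) / 2) ^ s * ((x + 1) / 2) ^ (n - s)

open Polynomial
open scoped Nat

theorem integral_sub_one_div_two_pow_mul_add_one_div_two_pow (a b : ℕ) :
    ∫ t in (-1 : ℝ)..1, ((t - 1) / 2) ^ a * ((t + 1) / 2) ^ b =
      2 * (-1) ^ a * a ! * b ! / (a + b + 1)! := by
  induction a generalizing b with
  | zero =>
    simp only [pow_zero, one_mul]
    rw [integral_comp_add_right (fun u : ℝ => (u / 2) ^ b) 1,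
      integral_comp_div (fun u : ℝ => u ^ b) two_ne_zero]
    norm_num [integral_pow, Nat.factorial_succ]
    field_simp
  | succ a ih =>
    have hsplit : ∀ t : ℝ, ((t - 1) / 2) ^ (a + 1) * ((t + 1) / 2) ^ b =
        ((t - 1) / 2) ^ a * ((t + 1) / 2) ^ (b + 1) - ((t - 1) / 2) ^ a * ((t + 1) / 2) ^ b :=
      fun t => by ring
    simp_rw [hsplit]
    rw [integral_sub ((by fun_prop : Continuous _).intervalIntegrable _ _)
      ((by fun_prop : Continuous _).intervalIntegrable _ _), ih, ih,
      show a + (b + 1) + 1 = a + b + 1 + 1 by ring, show a + 1 + b + 1 = a + b + 1 + 1 by ring]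
    push_cast [Nat.factorial_succ]
    field_simp
    ring

theorem sum_range_neg_one_pow_mul_choose_mul_eval_eq_zero {R : Type*} [CommRing R]
    {q : R[X]} {N : ℕ} (hq : q.natDegree < N) :
    ∑ s ∈ range (N + 1), (-1) ^ s * (N.choose s : R) * q.eval (s : R) = 0 := by
  have h := congr_fun (fwdDiff_iter_eq_zero_of_degree_lt hq) 0
  rw [fwdDiff_iter_eq_sum_shift, Pi.zero_apply] at h
  rw [← neg_one_pow_mul_eq_zero_iff (n := N), mul_sum, ← h]
  refine sum_congr rfl fun s hs => ?_
  obtain ⟨d, rfl⟩ := Nat.exists_eq_add_of_le (Nat.lt_succ_iff.mp (mem_range.mp hs))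
  have hsign : (-1 : R) ^ (s + d) * (-1) ^ s = (-1) ^ (s + d - s) := by
    rw [Nat.add_sub_cancel_left, pow_add, mul_right_comm, ← pow_add, ← two_mul, pow_mul]
    simp
  rw [zsmul_eq_mul, zero_add, nsmul_one, ← mul_assoc, ← mul_assoc, hsign]
  push_cast
  rfl

noncomputable def shiftedJacobi (a b n : ℕ) : ℝ[X] :=
  ∑ s ∈ range (n + 1),
    C ((n + a).choose (n - s) * (n + b).choose s : ℝ) * (X - 1) ^ s * X ^ (n - s)

theorem jacobiP_eq_eval_shiftedJacobi (a b n : ℕ) (x : ℝ) :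
    jacobiP a b n x = (shiftedJacobi a b n).eval ((x + 1) / 2) := by
  simp only [jacobiP, shiftedJacobi, eval_finsetSum, eval_mul, eval_pow, eval_C, eval_sub,
    eval_X, eval_one]
  ring_nf

theorem natDegree_shiftedJacobi_le (a b n : ℕ) : (shiftedJacobi a b n).natDegree ≤ n := by
  refine natDegree_sum_le_of_forall_le _ _ fun s hs => ?_
  calc _ ≤ s + (n - s) := by compute_degree
    _ = n := Nat.add_sub_cancel' (Nat.lt_succ_iff.mp (mem_range.mp hs))

theorem shiftedJacobi_eval_zero (a b n : ℕ) :
    (shiftedJacobi a b n).eval 0 = (-1) ^ n * (n + b).choose n := by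
  rw [shiftedJacobi, eval_finsetSum, sum_eq_single_of_mem n (self_mem_range_succ n)]
  · simp [mul_comm]
  · intro s hs hsn
    have : n - s ≠ 0 := by have := mem_range.mp hs; omega
    simp [this]

@[fun_prop]
theorem continuous_jacobiP (a b n : ℕ) : Continuous (jacobiP a b n) := by
  unfold jacobiP
  fun_prop

theorem integral_add_one_div_two_pow_mul_jacobiP_zero (b n k : ℕ) :
    ∫ t in (-1 : ℝ)..1, ((t + 1) / 2) ^ k * jacobiP 0 b n t =
      2 * n ! / (n + k + 1)! * ∑ s ∈ range (n + 1),
        (-1) ^ s * ((n + b).choose s : ℝ) * (ascPochhammer ℝ k).eval ((n : ℝ) + 1 - s) := by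
  simp_rw [jacobiP, mul_sum]
  rw [integral_finsetSum fun s _ => (by fun_prop : Continuous _).intervalIntegrable _ _]
  refine sum_congr rfl fun s hs => ?_
  have hs : s ≤ n := Nat.lt_succ_iff.mp (mem_range.mp hs)
  have hfact : n.choose (n - s) * s ! * (n - s + k)! = n ! * (n - s + 1).ascFactorial k := by
    rw [← Nat.factorial_mul_ascFactorial, ← mul_assoc, Nat.choose_symm hs,
      Nat.choose_mul_factorial_mul_factorial hs]
  have hpoch : (ascPochhammer ℝ k).eval ((n : ℝ) + 1 - s) = (n - s + 1).ascFactorial k := by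
    rw [Nat.cast_ascFactorial, Nat.cast_add_one, Nat.cast_sub hs, sub_add_eq_add_sub]
  have hterm : ∀ t : ℝ, ((t + 1) / 2) ^ k * ((n + 0).choose (n - s) * (n + b).choose s *
      ((t - 1) / 2) ^ s * ((t + 1) / 2) ^ (n - s)) =
      (n.choose (n - s) * (n + b).choose s : ℝ) *
        (((t - 1) / 2) ^ s * ((t + 1) / 2) ^ (n - s + k)) :=
    fun t => by rw [add_zero]; ring
  simp_rw [hterm]
  rw [intervalIntegral.integral_const_mul, integral_sub_one_div_two_pow_mul_add_one_div_two_pow, hpoch,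
    show s + (n - s + k) + 1 = n + k + 1 by omega]
  rw [← Nat.cast_inj (R := ℝ)] at hfact
  push_cast at hfact
  linear_combination 2 * (-1 : ℝ) ^ s * ((n + b).choose s) / (n + k + 1)! * hfact

theorem sum_range_neg_one_pow_mul_choose_mul_ascPochhammer_eval {b n k : ℕ} (hbk : b ≤ k)
    (hkn : k ≤ n + b) :
    ∑ s ∈ range (n + 1), (-1) ^ s * ((n + (b + 1)).choose s : ℝ) *
        (ascPochhammer ℝ k).eval ((n : ℝ) + 1 - s) =
      (-1) ^ (n + b) * (ascPochhammer ℝ k).eval (-(b : ℝ)) := by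
  set q : ℝ[X] := (ascPochhammer ℝ k).comp (C ((n : ℝ) + 1) - X)
  have hq : q.natDegree < n + (b + 1) := by
    calc q.natDegree ≤ k * 1 := by
          refine natDegree_comp_le.trans (Nat.mul_le_mul (ascPochhammer_natDegree ℝ k).le ?_)
          compute_degree
      _ < n + (b + 1) := by omega
  have hq_eval : ∀ x : ℝ, q.eval x = (ascPochhammer ℝ k).eval ((n : ℝ) + 1 - x) := by
    simp [q, eval_comp]
  -- The terms `s = n + 1 + j` beyond the range sit at the roots `-j` of the Pochhammer
  -- polynomial, except possibly the last one, `j = b`.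
  have htail : ∑ j ∈ range (b + 1), (-1) ^ (n + 1 + j) *
      ((n + (b + 1)).choose (n + 1 + j) : ℝ) * q.eval ((n + 1 + j : ℕ) : ℝ) =
      (-1) ^ (n + 1 + b) * (ascPochhammer ℝ k).eval (-(b : ℝ)) := by
    rw [sum_range_succ, sum_eq_zero fun j hj => ?_]
    · rw [show n + 1 + b = n + (b + 1) by ring, Nat.choose_self, hq_eval]
      push_cast
      ring_nf
    · rw [hq_eval, show (n : ℝ) + 1 - ((n + 1 + j : ℕ) : ℝ) = -(j : ℝ) by push_cast; ring,
        ascPochhammer_eval_neg_coe_nat_of_lt (by have := mem_range.mp hj; omega), mul_zero]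
  have hfull := sum_range_neg_one_pow_mul_choose_mul_eval_eq_zero hq
  rw [show n + (b + 1) + 1 = (n + 1) + (b + 1) by ring, sum_range_add, htail] at hfull
  simp only [hq_eval] at hfull
  linear_combination hfull

theorem integral_add_one_div_two_pow_mul_jacobiP_zero_succ_eq_zero {b n k : ℕ} (hbk : b < k)
    (hkn : k ≤ n + b) :
    ∫ t in (-1 : ℝ)..1, ((t + 1) / 2) ^ k * jacobiP 0 (b + 1) n t = 0 := by
  rw [integral_add_one_div_two_pow_mul_jacobiP_zero,
    sum_range_neg_one_pow_mul_choose_mul_ascPochhammer_eval hbk.le hkn,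
    ascPochhammer_eval_neg_coe_nat_of_lt hbk, mul_zero, mul_zero]

theorem integral_add_one_div_two_pow_mul_jacobiP_zero_succ_self (b n : ℕ) :
    ∫ t in (-1 : ℝ)..1, ((t + 1) / 2) ^ b * jacobiP 0 (b + 1) n t =
      (-1) ^ n * 2 * n ! * b ! / (n + b + 1)! := by
  rw [integral_add_one_div_two_pow_mul_jacobiP_zero,
    sum_range_neg_one_pow_mul_choose_mul_ascPochhammer_eval le_rfl (Nat.le_add_left b n),
    ascPochhammer_eval_neg_eq_descPochhammer, descPochhammer_eval_eq_descFactorial,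
    Nat.descFactorial_self]
  have hsign : ((-1 : ℝ) ^ b) ^ 2 = 1 := by rw [← pow_mul, mul_comm, pow_mul]; simp
  linear_combination (-1 : ℝ) ^ n * 2 * n ! * b ! / (n + b + 1)! * hsign

theorem integral_one_add_pow_mul_jacobiP_zero_succ_sq (b n : ℕ) :
    ∫ t in (-1 : ℝ)..1, (1 + t) ^ b * (jacobiP 0 (b + 1) n t) ^ 2 = (2 : ℝ) ^ (b + 1) / (b + 1) := by
  set p := shiftedJacobi 0 (b + 1) n
  have hP : ∀ t, jacobiP 0 (b + 1) n t = ∑ j ∈ range (n + 1), p.coeff j * ((t + 1) / 2) ^ j :=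
    fun t => by
      rw [jacobiP_eq_eval_shiftedJacobi,
        eval_eq_sum_range' (Nat.lt_succ_of_le (natDegree_shiftedJacobi_le 0 (b + 1) n))]
  have hexpand : ∀ t, (1 + t) ^ b * (jacobiP 0 (b + 1) n t) ^ 2 = ∑ j ∈ range (n + 1),
      2 ^ b * p.coeff j * (((t + 1) / 2) ^ (b + j) * jacobiP 0 (b + 1) n t) := fun t =>
    calc _ = 2 ^ b * ((t + 1) / 2) ^ b * jacobiP 0 (b + 1) n t * jacobiP 0 (b + 1) n t := by
          rw [← mul_pow, show 2 * ((t + 1) / 2) = 1 + t by ring]; ring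
      _ = _ := by
        rw [hP t, mul_sum]
        exact sum_congr rfl fun j _ => by ring
  rw [integral_congr fun t _ => hexpand t,
    integral_finsetSum fun j _ => (by fun_prop : Continuous _).intervalIntegrable _ _,
    sum_eq_single_of_mem 0 (mem_range.mpr n.succ_pos) fun j hj hj0 => ?_]
  · rw [intervalIntegral.integral_const_mul, add_zero, integral_add_one_div_two_pow_mul_jacobiP_zero_succ_self,
      coeff_zero_eq_eval_zero, shiftedJacobi_eval_zero]
    have hchoose := Nat.choose_mul_factorial_mul_factorial (Nat.le_add_right n (b + 1))
    rw [Nat.add_sub_cancel_left, Nat.factorial_succ, ← add_assoc] at hchoose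
    rw [← Nat.cast_inj (R := ℝ)] at hchoose
    push_cast at hchoose
    have hsign : ((-1 : ℝ) ^ n) ^ 2 = 1 := by rw [← pow_mul, mul_comm, pow_mul]; simp
    field_simp
    linear_combination (2 : ℝ) ^ (b + 1) *
      (((n + b + 1).choose n : ℝ) * n ! * b ! * (b + 1) * hsign + hchoose)
  · rw [intervalIntegral.integral_const_mul,
      integral_add_one_div_two_pow_mul_jacobiP_zero_succ_eq_zero (by omega)
        (by have := mem_range.mp hj; omega), mul_zero]

theorem integral_one_add_mul_jacobiP_zero_two_sq (n : ℕ) :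
    ∫ t in (-1 : ℝ)..1, (1 + t) * (jacobiP 0 2 n t) ^ 2 = 2 := by
  have h := integral_one_add_pow_mul_jacobiP_zero_succ_sq 1 n
  norm_num at h
  exact h
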